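/- arXiv:1701.05935 — 5 statements merged into one kernel-verified Lean document; each statement's English description precedes it below -/
import Mathlib

section
/- (Corollary 2) Let 0 < α < 1 and 0 < τ < 1, set β = 1 - (1-α)·τ and η = log α / log β - 1. Then η > -1 and for any Δ > 0 the NUMS maps the point at distance ℓ = Δ·(1-α) from the pivot to boundary distance δ = Δ·α^{1/(η+1)} = β·Δ; hence its new distance from the pivot is ρ = τ·(1-α)·Δ = τ·ℓ, which coincides with the boundary-shift rule ρ = τ·‖w^b - w^p‖ applied at that point. -/
/-- (Corollary 2) Let `0 < α < 1` and `0 < τ < 1`, set `β = 1 - (1-α) * τ` and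
`η = log α / log β - 1`. Then `η > -1` and for any `Δ > 0` the NUMS maps the point at distance
`ℓ = Δ * (1 - α)` from the pivot to boundary distance
`δ = Δ * ((Δ - ℓ)/Δ) ^ (1/(η+1)) = Δ * α ^ (1/(η+1)) = β * Δ`; hence its new distance from
the pivot is `ρ = Δ - δ = τ * (1-α) * Δ = τ * ℓ`, which coincides with the boundary-shift
rule `ρ = τ * ‖w^b - w^p‖` applied at that point. -/
theorem nums_eta_setting_no_boundary (α τ : ℝ) (hα : 0 < α ∧ α < 1) (hτ : 0 < τ ∧ τ < 1) :
    (-1 < Real.log α / Real.log (1 - (1 - α) * τ) - 1) ∧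
    (∀ Δ : ℝ, 0 < Δ →
      (Δ * ((Δ - Δ * (1 - α)) / Δ) ^
          (1 / ((Real.log α / Real.log (1 - (1 - α) * τ) - 1) + 1))
        = Δ * α ^ (1 / ((Real.log α / Real.log (1 - (1 - α) * τ) - 1) + 1)) ∧
       Δ * ((Δ - Δ * (1 - α)) / Δ) ^
          (1 / ((Real.log α / Real.log (1 - (1 - α) * τ) - 1) + 1))
        = (1 - (1 - α) * τ) * Δ ∧
       Δ - Δ * ((Δ - Δ * (1 - α)) / Δ) ^
          (1 / ((Real.log α / Real.log (1 - (1 - α) * τ) - 1) + 1))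
        = τ * (1 - α) * Δ ∧
       τ * (1 - α) * Δ = τ * (Δ * (1 - α)))) := by
  obtain ⟨hα0, hα1⟩ := hα
  obtain ⟨hτ0, hτ1⟩ := hτ
  set β := 1 - (1 - α) * τ with hβ
  have hαβ : α < β := by nlinarith
  have hβ1 : β < 1 := by nlinarith
  have hβ0 : 0 < β := lt_trans hα0 hαβ
  have hlogα : Real.log α < 0 := Real.log_neg hα0 hα1
  have hlogβ : Real.log β < 0 := Real.log_neg hβ0 hβ1
  have hlt : Real.log α < Real.log β := Real.log_lt_log hα0 hαβ
  have hratio : 1 < Real.log α / Real.log β := by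
    rw [lt_div_iff_of_neg hlogβ]; linarith
  have h1 : -1 < Real.log α / Real.log β - 1 := by linarith
  refine ⟨h1, fun Δ hΔ => ?_⟩
  have hsimp : (Δ - Δ * (1 - α)) / Δ = α := by field_simp; ring
  have hexp : (Real.log α / Real.log β - 1) + 1 = Real.log α / Real.log β := by ring
  have hαpow : α ^ (1 / (Real.log α / Real.log β)) = β := by
    rw [Real.rpow_def_of_pos hα0, ← Real.exp_log hβ0]
    congr 1
    field_simp [ne_of_lt hlogα]
    exact Real.log_exp _
  have key : Δ * ((Δ - Δ * (1 - α)) / Δ) ^ (1 / ((Real.log α / Real.log β - 1) + 1)) = β * Δ := by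
    rw [hsimp, hexp, hαpow, mul_comm]
  refine ⟨?_, key, ?_, by ring⟩
  · rw [hsimp]
  · rw [key]; nlinarith
end

section
/- Let 0 < α < 1, 0 < τ < 1 - α, β = 1 - τ and η = log α / log β - 1. Then for any Δ > 0 and every ℓ with 0 ≤ ℓ ≤ Δ·(1-α), the NUMS maps the point at distance ℓ from the pivot to a new distance ρ(ℓ) ≤ τ·Δ from the pivot; i.e., all non-boundary reference points are mapped into the region of interest of relative extent τ around the pivot. -/
/-- Let `0 < α < 1`, `0 < τ < 1 - α`, `β = 1 - τ` and `η = log α / log β - 1`. Then for any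
`Δ > 0` and every `ℓ` with `0 ≤ ℓ ≤ Δ * (1 - α)`, the NUMS maps the point at distance `ℓ`
from the pivot to a new distance `ρ(ℓ) = Δ - Δ * ((Δ - ℓ)/Δ) ^ (1/(η+1)) ≤ τ * Δ` from the
pivot; i.e., all non-boundary reference points are mapped into the region of interest of
relative extent `τ` around the pivot. -/
theorem nums_nonboundary_points_in_roi (α τ : ℝ) (hα : 0 < α ∧ α < 1)
    (hτ : 0 < τ ∧ τ < 1 - α) :
    ∀ Δ : ℝ, 0 < Δ → ∀ ℓ : ℝ, 0 ≤ ℓ → ℓ ≤ Δ * (1 - α) →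
      Δ - Δ * ((Δ - ℓ) / Δ) ^ (1 / ((Real.log α / Real.log (1 - τ) - 1) + 1)) ≤ τ * Δ := by
  obtain ⟨hα0, hα1⟩ := hα
  obtain ⟨hτ0, hτ1⟩ := hτ
  intro Δ hΔ ℓ hℓ0 hℓ1
  set β := 1 - τ with hβ
  have hβ0 : 0 < β := by linarith
  have hβ1 : β < 1 := by linarith
  have hlogα : Real.log α < 0 := Real.log_neg hα0 hα1
  have hlogβ : Real.log β < 0 := Real.log_neg hβ0 hβ1
  have hexp : 1 / ((Real.log α / Real.log β - 1) + 1) = Real.log β / Real.log α := by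
    rw [sub_add_cancel, one_div_div]
  have he0 : 0 < Real.log β / Real.log α := div_pos_of_neg_of_neg hlogβ hlogα
  set x := (Δ - ℓ) / Δ with hx
  have hxα : α ≤ x := by
    rw [hx, le_div_iff₀ hΔ]; nlinarith
  have hαβ : α ^ (Real.log β / Real.log α) = β := by
    rw [Real.rpow_def_of_pos hα0, mul_div_cancel₀ _ (ne_of_lt hlogα), Real.exp_log hβ0]
  have key : β ≤ x ^ (Real.log β / Real.log α) := by
    calc β = α ^ (Real.log β / Real.log α) := hαβ.symm
      _ ≤ x ^ (Real.log β / Real.log α) := Real.rpow_le_rpow hα0.le hxα he0.le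
  rw [hexp]
  nlinarith
end

section
/- Let m ≥ 2 and let w, wᵖ be points of the standard simplex in ℝᵐ with w ≠ wᵖ, and write ℓ = ‖w - wᵖ‖. Then the index set {i : w_i < wᵖ_i} is nonempty, the quantity Δ = min over i with w_i < wᵖ_i of wᵖ_i·ℓ/(wᵖ_i − w_i) is positive, and the point b = wᵖ + Δ·(w − wᵖ)/ℓ lies in the standard simplex and has at least one coordinate equal to zero; i.e., b is the intersection of the ray from wᵖ through w with the boundary of the simplex. -/
/-- Let `m ≥ 2` and let `w, wᵖ` be points of the standard simplex in `ℝᵐ` with `w ≠ wᵖ`, and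
write `ℓ = ‖w - wᵖ‖`. Then the index set `{i : w i < wᵖ i}` is nonempty, the quantity
`Δ = min_{i : w i < wᵖ i} wᵖ i * ℓ / (wᵖ i - w i)` is positive, and the point
`b = wᵖ + Δ * (w - wᵖ) / ℓ` lies in the standard simplex and has at least one coordinate equal
to zero; i.e., `b` is the intersection of the ray from `wᵖ` through `w` with the boundary of
the simplex. -/
theorem nums_boundary_intersection (m : ℕ) (hm : 2 ≤ m)
    (w wp : EuclideanSpace ℝ (Fin m))
    (hw : (∀ i, 0 ≤ w i) ∧ ∑ i, w i = 1)
    (hwp : (∀ i, 0 ≤ wp i) ∧ ∑ i, wp i = 1)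
    (hne : w ≠ wp) :
    (∃ i, w i < wp i) ∧
    (0 < ⨅ i : {j : Fin m // w j < wp j}, wp i * ‖w - wp‖ / (wp i - w i)) ∧
    ((∀ i : Fin m,
        0 ≤ wp i + (⨅ j : {j : Fin m // w j < wp j}, wp j * ‖w - wp‖ / (wp j - w j))
            * (w i - wp i) / ‖w - wp‖) ∧
     (∑ i : Fin m,
        (wp i + (⨅ j : {j : Fin m // w j < wp j}, wp j * ‖w - wp‖ / (wp j - w j))
            * (w i - wp i) / ‖w - wp‖)) = 1 ∧
     (∃ i : Fin m,
        wp i + (⨅ j : {j : Fin m // w j < wp j}, wp j * ‖w - wp‖ / (wp j - w j))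
            * (w i - wp i) / ‖w - wp‖ = 0)) := by
  obtain ⟨hw0, hw1⟩ := hw
  obtain ⟨hp0, hp1⟩ := hwp
  have hℓ : 0 < ‖w - wp‖ := by
    rw [norm_pos_iff]
    exact sub_ne_zero.mpr hne
  have hex : ∃ i, w i < wp i := by
    by_contra h
    push_neg at h
    apply hne
    ext i
    have heq : ∀ i ∈ Finset.univ, wp i = w i := by
      rw [← Finset.sum_eq_sum_iff_of_le (fun i _ => h i)]
      rw [hw1, hp1]
    exact (heq i (Finset.mem_univ i)).symm
  haveI : Nonempty {j : Fin m // w j < wp j} := ⟨⟨hex.choose, hex.choose_spec⟩⟩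
  set f : {j : Fin m // w j < wp j} → ℝ := fun j => wp j * ‖w - wp‖ / (wp j - w j) with hf
  have hfpos : ∀ j, 0 < f j := by
    intro j
    have h1 : (0:ℝ) < wp j := lt_of_le_of_lt (hw0 j) j.2
    have h2 : (0:ℝ) < wp j - w j := sub_pos.mpr j.2
    simp only [hf]
    positivity
  obtain ⟨j0, hj0⟩ := exists_eq_ciInf_of_finite (f := f)
  set Δ := ⨅ j, f j with hΔ
  have hΔpos : 0 < Δ := hj0 ▸ hfpos j0
  have hΔle : ∀ j : {j : Fin m // w j < wp j}, Δ ≤ f j := fun j =>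
    ciInf_le (Set.Finite.bddBelow (Set.finite_range f)) j
  refine ⟨hex, hΔpos, ?_, ?_, ?_⟩
  · intro i
    have key : 0 ≤ wp i * ‖w - wp‖ + Δ * (w i - wp i) := by
      by_cases h : w i < wp i
      · have h2 : (0:ℝ) < wp i - w i := sub_pos.mpr h
        have := hΔle ⟨i, h⟩
        simp only [hf] at this
        rw [le_div_iff₀ h2] at this
        nlinarith
      · push_neg at h
        have : 0 ≤ Δ * (w i - wp i) := mul_nonneg hΔpos.le (by linarith)
        nlinarith [mul_nonneg (hp0 i) hℓ.le]
    have heq : wp i + Δ * (w i - wp i) / ‖w - wp‖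
        = (wp i * ‖w - wp‖ + Δ * (w i - wp i)) / ‖w - wp‖ := by
      field_simp
    rw [heq]
    exact div_nonneg key hℓ.le
  · rw [Finset.sum_add_distrib]
    have h1 : ∑ i, Δ * (w i - wp i) / ‖w - wp‖
        = Δ / ‖w - wp‖ * ∑ i, (w i - wp i) := by
      rw [Finset.mul_sum]
      exact Finset.sum_congr rfl (fun i _ => by ring)
    have h2 : ∑ i, (w i - wp i) = 0 := by
      rw [Finset.sum_sub_distrib, hw1, hp1, sub_self]
    rw [h1, h2, hp1, mul_zero, add_zero]
  · refine ⟨j0, ?_⟩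
    rw [← hj0]
    have h2 : (0:ℝ) < wp j0 - w j0 := sub_pos.mpr j0.2
    simp only [hf]
    field_simp
    ring
end

section
/- Let m ≥ 2 and let w, wᵖ be points of the standard simplex in ℝᵐ with w ≠ wᵖ, write ℓ = ‖w - wᵖ‖, and let Δ = min over indices i with w_i < wᵖ_i of wᵖ_i·ℓ/(wᵖ_i − w_i). Then Δ = ℓ if and only if there exists an index i with w_i = 0 and wᵖ_i > 0; i.e., the criterion Δ − ‖w − wᵖ‖ = 0 detects exactly the reference points lying on a boundary face of the simplex that the ray from wᵖ through w exits. -/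
/-- Let `m ≥ 2` and let `w, wᵖ` be points of the standard simplex in `ℝᵐ` with `w ≠ wᵖ`,
write `ℓ = ‖w - wᵖ‖`, and let `Δ = min_{i : w i < wᵖ i} wᵖ i * ℓ / (wᵖ i - w i)`.
Then `Δ = ℓ` if and only if there exists an index `i` with `w i = 0` and `wᵖ i > 0`;
i.e., the criterion `Δ - ‖w - wᵖ‖ = 0` detects exactly the reference points lying on a
boundary face of the simplex that the ray from `wᵖ` through `w` exits. -/
theorem nums_boundary_detection (m : ℕ) (hm : 2 ≤ m)
    (w wp : EuclideanSpace ℝ (Fin m))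
    (hw : (∀ i, 0 ≤ w i) ∧ ∑ i, w i = 1)
    (hwp : (∀ i, 0 ≤ wp i) ∧ ∑ i, wp i = 1)
    (hne : w ≠ wp) :
    (⨅ i : {j : Fin m // w j < wp j}, wp i * ‖w - wp‖ / (wp i - w i)) = ‖w - wp‖ ↔
      ∃ i : Fin m, w i = 0 ∧ 0 < wp i := by
  set ℓ : ℝ := ‖w - wp‖ with hℓdef
  have hℓ : 0 < ℓ := by
    rw [hℓdef]
    exact norm_sub_pos_iff.mpr hne
  have hNE : Nonempty {j : Fin m // w j < wp j} := by
    by_contra h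
    rw [not_nonempty_iff] at h
    have hle : ∀ i ∈ Finset.univ, wp i ≤ w i := fun i _ =>
      not_lt.mp (fun hlt => h.false ⟨i, hlt⟩)
    have hsum : ∑ i, wp i = ∑ i, w i := by rw [hw.2, hwp.2]
    have heq : ∀ i ∈ Finset.univ, wp i = w i :=
      (Finset.sum_eq_sum_iff_of_le hle).mp hsum
    exact hne (PiLp.ext fun i => (heq i (Finset.mem_univ i)).symm)
  set f : {j : Fin m // w j < wp j} → ℝ := fun i => wp i * ℓ / (wp i - w i) with hf
  have hbdd : BddBelow (Set.range f) := (Set.finite_range f).bddBelow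
  have hge : ∀ i : {j : Fin m // w j < wp j}, ℓ ≤ f i := by
    rintro ⟨i, hi⟩
    have hpos : 0 < wp i - w i := sub_pos.mpr hi
    have h1 : (wp i - w i) * ℓ ≤ wp i * ℓ := by
      apply mul_le_mul_of_nonneg_right _ hℓ.le
      linarith [hw.1 i]
    calc ℓ = (wp i - w i) * ℓ / (wp i - w i) := by field_simp
    _ ≤ wp i * ℓ / (wp i - w i) := by gcongr
  constructor
  · intro h
    obtain ⟨i0, hi0⟩ := Finite.exists_min f
    have hfi0 : f i0 = ℓ := by
      exact le_antisymm ((le_ciInf hi0).trans h.le) (hge i0)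
    have hpos : 0 < wp i0 - w i0.1 := sub_pos.mpr i0.2
    have : wp i0 * ℓ = ℓ * (wp i0 - w i0.1) := by
      have hfi0' : wp i0 * ℓ / (wp i0 - w i0.1) = ℓ := hfi0
      rw [div_eq_iff hpos.ne'] at hfi0'
      linarith [hfi0]
    have hw0 : w i0.1 = 0 := by
      have := mul_left_cancel₀ hℓ.ne' (by linarith : ℓ * wp i0.1 = ℓ * (wp i0.1 - w i0.1))
      linarith
    exact ⟨i0, hw0, lt_of_le_of_lt (le_of_eq hw0.symm) i0.2⟩
  · rintro ⟨i, hwi, hwpi⟩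
    have hmem : w i < wp i := hwi ▸ hwpi
    have hfi : f ⟨i, hmem⟩ = ℓ := by
      simp only [hf, hwi, sub_zero]
      field_simp
    apply le_antisymm
    · calc (⨅ j, f j) ≤ f ⟨i, hmem⟩ := ciInf_le hbdd _
      _ = ℓ := hfi
    · exact le_ciInf hge
end

section
/- Let m ≥ 2 and let w, wᵖ be points of the standard simplex in ℝᵐ with w ≠ wᵖ, write ℓ = ‖w - wᵖ‖, and let Δ = min over indices i with w_i < wᵖ_i of wᵖ_i·ℓ/(wᵖ_i − w_i). Then for every ρ with 0 ≤ ρ ≤ Δ, the mapped point w' = wᵖ + ρ·(w − wᵖ)/ℓ lies in the standard simplex (its coordinates are nonnegative and sum to 1); hence every reference point adapted by the NUMS remains a valid point of the simplex. -/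
/-- Let `m ≥ 2` and let `w, wᵖ` be points of the standard simplex in `ℝᵐ` with `w ≠ wᵖ`,
write `ℓ = ‖w - wᵖ‖`, and let `Δ = min_{i : w i < wᵖ i} wᵖ i * ℓ / (wᵖ i - w i)`.
Then for every `ρ` with `0 ≤ ρ ≤ Δ`, the mapped point `w' = wᵖ + ρ * (w - wᵖ) / ℓ` lies in
the standard simplex (its coordinates are nonnegative and sum to `1`); hence every reference
point adapted by the NUMS remains a valid point of the simplex. -/
theorem nums_mapped_point_in_simplex (m : ℕ) (hm : 2 ≤ m)
    (w wp : EuclideanSpace ℝ (Fin m))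
    (hw : (∀ i, 0 ≤ w i) ∧ ∑ i, w i = 1)
    (hwp : (∀ i, 0 ≤ wp i) ∧ ∑ i, wp i = 1)
    (hne : w ≠ wp) :
    ∀ ρ : ℝ, 0 ≤ ρ →
      ρ ≤ (⨅ i : {j : Fin m // w j < wp j}, wp i * ‖w - wp‖ / (wp i - w i)) →
      ((∀ i : Fin m, 0 ≤ wp i + ρ * (w i - wp i) / ‖w - wp‖) ∧
       (∑ i : Fin m, (wp i + ρ * (w i - wp i) / ‖w - wp‖)) = 1) := by
  intro ρ hρ hρΔ
  have hl : (0:ℝ) < ‖w - wp‖ := by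
    rw [norm_pos_iff]
    exact sub_ne_zero.mpr hne
  constructor
  · intro i
    by_cases h : w i < wp i
    · have hbdd : BddBelow (Set.range fun i : {j : Fin m // w j < wp j} =>
        wp i * ‖w - wp‖ / (wp i - w i)) := Finite.bddBelow_range _
      have hρi : ρ ≤ wp i * ‖w - wp‖ / (wp i - w i) :=
        le_trans hρΔ (ciInf_le hbdd ⟨i, h⟩)
      have h1 : ρ * (wp i - w i) ≤ wp i * ‖w - wp‖ :=
        (le_div_iff₀ (sub_pos.mpr h)).mp hρi
      have h2 : ρ * (wp i - w i) / ‖w - wp‖ ≤ wp i * ‖w - wp‖ / ‖w - wp‖ :=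
        (div_le_div_iff_of_pos_right hl).mpr h1
      have h3 : wp i * ‖w - wp‖ / ‖w - wp‖ = wp i := by
        field_simp
      have h4 : ρ * (w i - wp i) / ‖w - wp‖ = -(ρ * (wp i - w i) / ‖w - wp‖) := by
        ring
      linarith
    · have : 0 ≤ ρ * (w i - wp i) / ‖w - wp‖ :=
        div_nonneg (mul_nonneg hρ (sub_nonneg.mpr (not_lt.mp h))) hl.le
      linarith [hwp.1 i]
  · have heq : ∀ i : Fin m, wp i + ρ * (w i - wp i) / ‖w - wp‖
        = wp i + (ρ / ‖w - wp‖) * (w i - wp i) := by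
      intro i; ring
    simp only [heq, Finset.sum_add_distrib, ← Finset.mul_sum, Finset.sum_sub_distrib,
      hw.2, hwp.2]
    ring
end
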